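/- arXiv:2010.06709 — 4 statements merged into one kernel-verified Lean document; each statement's English description precedes it below -/
import Mathlib

section
/- For densities: if for all outputs z and all inputs x, x' the conditional density satisfies m(z|x) ≤ e^ε · m(z|x'), then for any two input distributions P₁, P₂ with induced output distributions M₁, M₂ (Mᵢ(E) = ∫∫_E m(z|x) dz dPᵢ(x)), one has D_KL(M₁‖M₂) + D_KL(M₂‖M₁) ≤ 4(e^ε − 1)² · ‖P₁ − P₂‖²_TV. -/
open MeasureTheory Real

/-- Bound `|∫ g·q|` by `B · (1/2)∫|q|` when `0 ≤ g ≤ B` and `∫ q = 0`. -/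
lemma ldp_int_mul_le (g q : ℝ → ℝ) (B : ℝ)
    (hg0 : ∀ x, 0 ≤ g x) (hgB : ∀ x, g x ≤ B)
    (hgm : Measurable g) (hq : Integrable q) (hq0 : ∫ x, q x = 0) :
    |∫ x, g x * q x| ≤ B * ((1 / 2) * ∫ x, |q x|) := by
  have hB : 0 ≤ B := le_trans (hg0 0) (hgB 0)
  have hgq : Integrable (fun x => g x * q x) :=
    hq.bdd_mul (c := B) hgm.aestronglyMeasurable
      (Filter.Eventually.of_forall fun x => by rw [Real.norm_eq_abs, abs_of_nonneg (hg0 x)]; exact hgB x)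
  have habs : Integrable (fun x => |q x|) := hq.abs
  have hqp_eqfun : (fun x => max (q x) 0) = fun x => (q x + |q x|) / 2 := by
    funext x
    rcases le_total (q x) 0 with h | h
    · rw [max_eq_right h, abs_of_nonpos h]; ring
    · rw [max_eq_left h, abs_of_nonneg h]; ring
  have hqn_eqfun : (fun x => min (q x) 0) = fun x => (q x - |q x|) / 2 := by
    funext x
    rcases le_total (q x) 0 with h | h
    · rw [min_eq_left h, abs_of_nonpos h]; ring
    · rw [min_eq_right h, abs_of_nonneg h]; ring
  have hqp : Integrable (fun x => max (q x) 0) := by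
    rw [hqp_eqfun]; exact (hq.add habs).div_const 2
  have hqn : Integrable (fun x => min (q x) 0) := by
    rw [hqn_eqfun]; exact (hq.sub habs).div_const 2
  have hqp_eq : ∫ x, max (q x) 0 = (1 / 2) * ∫ x, |q x| := by
    rw [hqp_eqfun]
    rw [integral_div, integral_add hq habs, hq0]
    ring
  have hqn_eq : ∫ x, min (q x) 0 = -((1 / 2) * ∫ x, |q x|) := by
    rw [hqn_eqfun]
    rw [integral_div, integral_sub hq habs, hq0]
    ring
  refine abs_le.mpr ⟨?_, ?_⟩
  · have hpt : ∀ x, B * min (q x) 0 ≤ g x * q x := by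
      intro x
      rcases le_total (q x) 0 with h | h
      · rw [min_eq_left h]; nlinarith [hg0 x, hgB x]
      · rw [min_eq_right h]; simpa using mul_nonneg (hg0 x) h
    have h := integral_mono (hqn.const_mul B) hgq hpt
    rw [integral_const_mul, hqn_eq] at h
    linarith
  · have hpt : ∀ x, g x * q x ≤ B * max (q x) 0 := by
      intro x
      rcases le_total (q x) 0 with h | h
      · rw [max_eq_right h]
        simpa using mul_nonpos_of_nonneg_of_nonpos (hg0 x) h
      · rw [max_eq_left h]; nlinarith [hg0 x, hgB x]
    have h := integral_mono hgq (hqp.const_mul B) hpt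
    rw [integral_const_mul, hqp_eq] at h
    linarith

/-- Pointwise bound on the symmetrized KL integrand. -/
lemma ldp_key_pt (K a b c : ℝ) (hK : 0 ≤ K) (hc : 0 ≤ c) (hca : c ≤ a) (hcb : c ≤ b)
    (hd : |a - b| ≤ K * c) :
    a * Real.log (a / b) + b * Real.log (b / a) ≤ K ^ 2 * a := by
  by_cases hc0 : c = 0
  · have habs : |a - b| = 0 :=
      le_antisymm (by simpa [hc0] using hd) (abs_nonneg _)
    have hab : a = b := by have := abs_eq_zero.mp habs; linarith
    rw [hab]
    by_cases hb0 : b = 0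
    · simp [hb0]
    · rw [div_self hb0, Real.log_one]
      have hb : 0 ≤ b := le_trans hc hcb
      nlinarith [sq_nonneg K]
  · have hc' : 0 < c := lt_of_le_of_ne hc (Ne.symm hc0)
    have ha : 0 < a := hc'.trans_le hca
    have hb : 0 < b := hc'.trans_le hcb
    have hlog : |Real.log (a / b)| ≤ |a - b| / c := by
      rcases le_total a b with h | h
      · have h1 : Real.log (b / a) ≤ (b - a) / a := by
          have := Real.log_le_sub_one_of_pos (div_pos hb ha)
          calc Real.log (b / a) ≤ b / a - 1 := this
            _ = (b - a) / a := by field_simp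
        have h2 : Real.log (a / b) = -Real.log (b / a) := by
          rw [← Real.log_inv]; congr 1; rw [inv_div]
        rw [h2, abs_neg, abs_of_nonneg (Real.log_nonneg (by rw [le_div_iff₀ ha]; linarith))]
        calc Real.log (b / a) ≤ (b - a) / a := h1
          _ ≤ (b - a) / c := div_le_div_of_nonneg_left (by linarith) hc' hca
          _ = |a - b| / c := by rw [abs_sub_comm, abs_of_nonneg (by linarith)]
      · have h1 : Real.log (a / b) ≤ (a - b) / b := by
          have := Real.log_le_sub_one_of_pos (div_pos ha hb)
          calc Real.log (a / b) ≤ a / b - 1 := this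
            _ = (a - b) / b := by field_simp
        rw [abs_of_nonneg (Real.log_nonneg (by rw [le_div_iff₀ hb]; linarith))]
        calc Real.log (a / b) ≤ (a - b) / b := h1
          _ ≤ (a - b) / c := div_le_div_of_nonneg_left (by linarith) hc' hcb
          _ = |a - b| / c := by rw [abs_of_nonneg (by linarith)]
    have hlhs : a * Real.log (a / b) + b * Real.log (b / a) = (a - b) * Real.log (a / b) := by
      rw [Real.log_div hb.ne' ha.ne', Real.log_div ha.ne' hb.ne']; ring
    rw [hlhs]
    calc (a - b) * Real.log (a / b) ≤ |(a - b) * Real.log (a / b)| := le_abs_self _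
      _ = |a - b| * |Real.log (a / b)| := abs_mul _ _
      _ ≤ (K * c) * (|a - b| / c) := by
          apply mul_le_mul hd hlog (by positivity) (by positivity)
      _ ≤ (K * c) * ((K * c) / c) := by
          have hdc : |a - b| / c ≤ (K * c) / c := by gcongr
          exact mul_le_mul_of_nonneg_left hdc (by positivity)
      _ = K ^ 2 * c := by field_simp
      _ ≤ K ^ 2 * a := mul_le_mul_of_nonneg_left hca (sq_nonneg K)

/-- Integrability bound for the KL integrand. -/
lemma ldp_klog_abs (ε a b : ℝ) (hε : 0 ≤ ε) (ha : 0 ≤ a)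
    (hab : a ≤ Real.exp ε * b) (hba : b ≤ Real.exp ε * a) :
    |a * Real.log (a / b)| ≤ ε * a := by
  rcases eq_or_lt_of_le ha with h0 | ha'
  · simp [← h0]
  · have hexp : (0:ℝ) < Real.exp ε := Real.exp_pos ε
    have hb : 0 < b := by nlinarith
    rw [abs_mul, abs_of_nonneg ha]
    have h1 : Real.log (a / b) ≤ ε := by
      have hdiv : a / b ≤ Real.exp ε := (div_le_iff₀ hb).mpr (by linarith)
      calc Real.log (a / b) ≤ Real.log (Real.exp ε) :=
            Real.log_le_log (by positivity) hdiv
        _ = ε := Real.log_exp ε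
    have h2 : -ε ≤ Real.log (a / b) := by
      have h3 : Real.exp (-ε) * b ≤ Real.exp (-ε) * (Real.exp ε * a) :=
        mul_le_mul_of_nonneg_left hba (Real.exp_pos _).le
      rw [← mul_assoc, ← Real.exp_add, neg_add_cancel, Real.exp_zero, one_mul] at h3
      have hdiv : Real.exp (-ε) ≤ a / b := (le_div_iff₀ hb).mpr h3
      calc -ε = Real.log (Real.exp (-ε)) := (Real.log_exp _).symm
        _ ≤ Real.log (a / b) := Real.log_le_log (Real.exp_pos _) hdiv
    calc a * |Real.log (a / b)| ≤ a * ε :=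
          mul_le_mul_of_nonneg_left (abs_le.mpr ⟨h2, h1⟩) ha
      _ = ε * a := mul_comm a ε

/-- Fubini for output densities: integrability and total mass 1. -/
lemma ldp_fubini (m : ℝ → ℝ → ℝ) (p : ℝ → ℝ) (M : ℝ → ℝ)
    (hm_nonneg : ∀ z x, 0 ≤ m z x) (hm_meas : Measurable (Function.uncurry m))
    (hm_int : ∀ x, Integrable fun z => m z x) (hm_density : ∀ x, ∫ z, m z x = 1)
    (hp0 : ∀ x, 0 ≤ p x) (hpm : Measurable p) (hpi : Integrable p) (hpd : ∫ x, p x = 1)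
    (hMint : ∀ z, Integrable fun x => m z x * p x)
    (hM : ∀ z, M z = ∫ x, m z x * p x) :
    Integrable M ∧ ∫ z, M z = 1 := by
  have hMeq : M = fun z => ∫ x, m z x * p x := funext hM
  have hfm : Measurable fun q : ℝ × ℝ => m q.1 q.2 * p q.2 :=
    hm_meas.mul (hpm.comp measurable_snd)
  have hMsm : StronglyMeasurable M := by
    rw [hMeq]
    exact hfm.stronglyMeasurable.integral_prod_right'
  have hmx : ∀ x, Measurable fun z => m z x := fun x => by
    have : (fun z => m z x) = fun z => Function.uncurry m (z, x) := rfl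
    rw [this]; exact hm_meas.comp (measurable_id.prodMk measurable_const)
  have hL : ∫⁻ z, ENNReal.ofReal (M z) = 1 := by
    have h1 : ∀ z, ENNReal.ofReal (M z) = ∫⁻ x, ENNReal.ofReal (m z x * p x) := fun z => by
      rw [hM]
      exact ofReal_integral_eq_lintegral_ofReal (hMint z)
        (Filter.Eventually.of_forall fun x => mul_nonneg (hm_nonneg z x) (hp0 x))
    simp_rw [h1]
    rw [lintegral_lintegral_swap (hfm.ennreal_ofReal.aemeasurable)]
    have h2 : ∀ x, ∫⁻ z, ENNReal.ofReal (m z x * p x) = ENNReal.ofReal (p x) := fun x => by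
      calc ∫⁻ z, ENNReal.ofReal (m z x * p x)
          = ∫⁻ z, ENNReal.ofReal (m z x) * ENNReal.ofReal (p x) := by
            simp_rw [ENNReal.ofReal_mul (hm_nonneg _ x)]
        _ = (∫⁻ z, ENNReal.ofReal (m z x)) * ENNReal.ofReal (p x) :=
            lintegral_mul_const _ (hmx x).ennreal_ofReal
        _ = ENNReal.ofReal (1:ℝ) * ENNReal.ofReal (p x) := by
            rw [← ofReal_integral_eq_lintegral_ofReal (hm_int x)
              (Filter.Eventually.of_forall fun z => hm_nonneg z x), hm_density x]
        _ = ENNReal.ofReal (p x) := by simp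
    simp_rw [h2]
    rw [← ofReal_integral_eq_lintegral_ofReal hpi (Filter.Eventually.of_forall hp0), hpd,
      ENNReal.ofReal_one]
  have hM0 : ∀ z, 0 ≤ M z := fun z => by
    rw [hM]; exact integral_nonneg fun x => mul_nonneg (hm_nonneg z x) (hp0 x)
  have hMint' : Integrable M := by
    refine ⟨hMsm.aestronglyMeasurable, ?_⟩
    rw [hasFiniteIntegral_iff_ofReal (Filter.Eventually.of_forall hM0), hL]
    exact ENNReal.one_lt_top
  refine ⟨hMint', ?_⟩
  rw [integral_eq_lintegral_of_nonneg_ae (Filter.Eventually.of_forall hM0)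
    hMsm.aestronglyMeasurable, hL]
  simp

/-- Theorem 1 of Duchi–Jordan–Wainwright, density version. If the conditional output
density `m z x` of a channel satisfies `m z x ≤ e^ε · m z x'` for all outputs `z` and
inputs `x, x'` (ε-LDP), then for any two input distributions with densities `p₁, p₂`
and induced output densities `M₁ z = ∫ m z x · p₁ x dx`, `M₂ z = ∫ m z x · p₂ x dx`,
the symmetrized KL divergence is bounded by `4(e^ε − 1)²‖P₁ − P₂‖²_TV`, where
`‖P₁ − P₂‖_TV = (1/2)∫ |p₁ − p₂|`. -/
theorem ldp_kl_contraction (ε : ℝ) (hε : 0 ≤ ε)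
    (m : ℝ → ℝ → ℝ) (p₁ p₂ : ℝ → ℝ)
    (hm_nonneg : ∀ z x, 0 ≤ m z x)
    (hm_meas : Measurable (Function.uncurry m))
    (hm_density : ∀ x, ∫ z, m z x = 1)
    (hLDP : ∀ z x x', m z x ≤ Real.exp ε * m z x')
    (hp₁_nonneg : ∀ x, 0 ≤ p₁ x) (hp₂_nonneg : ∀ x, 0 ≤ p₂ x)
    (hp₁_meas : Measurable p₁) (hp₂_meas : Measurable p₂)
    (hp₁_int : Integrable p₁) (hp₂_int : Integrable p₂)
    (hp₁_density : ∫ x, p₁ x = 1) (hp₂_density : ∫ x, p₂ x = 1)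
    (M₁ M₂ : ℝ → ℝ)
    (hM₁ : ∀ z, M₁ z = ∫ x, m z x * p₁ x)
    (hM₂ : ∀ z, M₂ z = ∫ x, m z x * p₂ x) :
    (∫ z, M₁ z * Real.log (M₁ z / M₂ z)) + (∫ z, M₂ z * Real.log (M₂ z / M₁ z)) ≤
      4 * (Real.exp ε - 1) ^ 2 * ((1 / 2) * ∫ x, |p₁ x - p₂ x|) ^ 2 := by
  have hexp : (0:ℝ) < Real.exp ε := Real.exp_pos ε
  have h1exp : (1:ℝ) ≤ Real.exp ε := Real.one_le_exp hε
  set T : ℝ := (1 / 2) * ∫ x, |p₁ x - p₂ x| with hTdef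
  have hT0 : 0 ≤ T := by
    apply mul_nonneg (by norm_num)
    exact integral_nonneg fun x => abs_nonneg _
  set K : ℝ := (Real.exp ε - 1) * T with hKdef
  have hK0 : 0 ≤ K := mul_nonneg (by linarith) hT0
  -- section measurability
  have hmz : ∀ z, Measurable fun x => m z x := fun z => hm_meas.of_uncurry_left
  -- integrability of z-sections
  have hmz_int : ∀ x, Integrable (fun z => m z x) := fun x => by
    by_contra h
    have := hm_density x
    rw [integral_undef h] at this
    norm_num at this
  -- integrability of x ↦ m z x * p x
  have hint : ∀ (z : ℝ) (p : ℝ → ℝ), Integrable p → Integrable (fun x => m z x * p x) :=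
    fun z p hpi =>
    hpi.bdd_mul (c := Real.exp ε * m z 0) (hmz z).aestronglyMeasurable
      (Filter.Eventually.of_forall fun x => by
        rw [Real.norm_eq_abs, abs_of_nonneg (hm_nonneg z x)]; exact hLDP z x 0)
  have hint₁ : ∀ z, Integrable (fun x => m z x * p₁ x) := fun z => hint z p₁ hp₁_int
  have hint₂ : ∀ z, Integrable (fun x => m z x * p₂ x) := fun z => hint z p₂ hp₂_int
  -- infimum of the density over inputs
  set c : ℝ → ℝ := fun z => ⨅ x, m z x with hcdef
  have hbdd : ∀ z, BddBelow (Set.range fun x => m z x) := fun z =>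
    ⟨0, fun y ⟨x, hx⟩ => hx ▸ hm_nonneg z x⟩
  have hc_le : ∀ z x, c z ≤ m z x := fun z x => ciInf_le (hbdd z) x
  have hc0 : ∀ z, 0 ≤ c z := fun z => le_ciInf fun x => hm_nonneg z x
  have hm_le_c : ∀ z x, m z x ≤ Real.exp ε * c z := fun z x => by
    have h1 : m z x / Real.exp ε ≤ c z := le_ciInf fun x' => by
      rw [div_le_iff₀ hexp]
      calc m z x ≤ Real.exp ε * m z x' := hLDP z x x'
        _ = m z x' * Real.exp ε := mul_comm _ _
    calc m z x = Real.exp ε * (m z x / Real.exp ε) := by field_simp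
      _ ≤ Real.exp ε * c z := mul_le_mul_of_nonneg_left h1 hexp.le
  -- bounds on M₁, M₂
  have hM₁_ge : ∀ z, c z ≤ M₁ z := fun z => by
    rw [hM₁]
    calc c z = ∫ x, c z * p₁ x := by rw [integral_const_mul, hp₁_density, mul_one]
      _ ≤ ∫ x, m z x * p₁ x :=
        integral_mono (hp₁_int.const_mul _) (hint₁ z)
          fun x => mul_le_mul_of_nonneg_right (hc_le z x) (hp₁_nonneg x)
  have hM₂_ge : ∀ z, c z ≤ M₂ z := fun z => by
    rw [hM₂]
    calc c z = ∫ x, c z * p₂ x := by rw [integral_const_mul, hp₂_density, mul_one]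
      _ ≤ ∫ x, m z x * p₂ x :=
        integral_mono (hp₂_int.const_mul _) (hint₂ z)
          fun x => mul_le_mul_of_nonneg_right (hc_le z x) (hp₂_nonneg x)
  have hM₁_le : ∀ z, M₁ z ≤ Real.exp ε * c z := fun z => by
    rw [hM₁]
    calc ∫ x, m z x * p₁ x ≤ ∫ x, (Real.exp ε * c z) * p₁ x :=
          integral_mono (hint₁ z) (hp₁_int.const_mul _)
            fun x => mul_le_mul_of_nonneg_right (hm_le_c z x) (hp₁_nonneg x)
      _ = Real.exp ε * c z := by rw [integral_const_mul, hp₁_density, mul_one]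
  have hM₂_le : ∀ z, M₂ z ≤ Real.exp ε * c z := fun z => by
    rw [hM₂]
    calc ∫ x, m z x * p₂ x ≤ ∫ x, (Real.exp ε * c z) * p₂ x :=
          integral_mono (hint₂ z) (hp₂_int.const_mul _)
            fun x => mul_le_mul_of_nonneg_right (hm_le_c z x) (hp₂_nonneg x)
      _ = Real.exp ε * c z := by rw [integral_const_mul, hp₂_density, mul_one]
  have hM₁0 : ∀ z, 0 ≤ M₁ z := fun z => le_trans (hc0 z) (hM₁_ge z)
  have hM₂0 : ∀ z, 0 ≤ M₂ z := fun z => le_trans (hc0 z) (hM₂_ge z)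
  -- difference bound
  have hq_int : Integrable (fun x => p₁ x - p₂ x) := hp₁_int.sub hp₂_int
  have hq0 : ∫ x, (p₁ x - p₂ x) = 0 := by
    rw [integral_sub hp₁_int hp₂_int, hp₁_density, hp₂_density]; ring
  have hdiff : ∀ z, |M₁ z - M₂ z| ≤ K * c z := fun z => by
    have heq : M₁ z - M₂ z = ∫ x, (m z x - c z) * (p₁ x - p₂ x) := by
      have h1 : (fun x => (m z x - c z) * (p₁ x - p₂ x)) =
          fun x => (m z x * p₁ x - m z x * p₂ x) - (c z * p₁ x - c z * p₂ x) :=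
        funext fun x => by ring
      have hA : Integrable (fun x => m z x * p₁ x - m z x * p₂ x) := (hint₁ z).sub (hint₂ z)
      have hB : Integrable (fun x => c z * p₁ x - c z * p₂ x) :=
        (hp₁_int.const_mul _).sub (hp₂_int.const_mul _)
      rw [hM₁, hM₂, h1, integral_sub hA hB,
        integral_sub (hint₁ z) (hint₂ z),
        integral_sub (hp₁_int.const_mul _) (hp₂_int.const_mul _),
        integral_const_mul, integral_const_mul, hp₁_density, hp₂_density]
      ring
    rw [heq]
    have h := ldp_int_mul_le (fun x => m z x - c z) (fun x => p₁ x - p₂ x)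
      ((Real.exp ε - 1) * c z)
      (fun x => sub_nonneg.mpr (hc_le z x))
      (fun x => by show m z x - c z ≤ _; have := hm_le_c z x; nlinarith)
      ((hmz z).sub measurable_const) hq_int hq0
    calc |∫ x, (m z x - c z) * (p₁ x - p₂ x)| ≤ ((Real.exp ε - 1) * c z) * T := h
      _ = K * c z := by rw [hKdef]; ring
  -- Fubini facts
  obtain ⟨hM₁_int, hM₁_tot⟩ := ldp_fubini m p₁ M₁ hm_nonneg hm_meas hmz_int hm_density
    hp₁_nonneg hp₁_meas hp₁_int hp₁_density hint₁ hM₁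
  obtain ⟨hM₂_int, hM₂_tot⟩ := ldp_fubini m p₂ M₂ hm_nonneg hm_meas hmz_int hm_density
    hp₂_nonneg hp₂_meas hp₂_int hp₂_density hint₂ hM₂
  -- relation M₁ ≤ e^ε M₂ etc.
  have hM₁M₂ : ∀ z, M₁ z ≤ Real.exp ε * M₂ z := fun z =>
    le_trans (hM₁_le z) (mul_le_mul_of_nonneg_left (hM₂_ge z) hexp.le)
  have hM₂M₁ : ∀ z, M₂ z ≤ Real.exp ε * M₁ z := fun z =>
    le_trans (hM₂_le z) (mul_le_mul_of_nonneg_left (hM₁_ge z) hexp.le)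
  -- integrability of the KL integrands
  have hlogmeas : AEStronglyMeasurable (fun z => M₁ z * Real.log (M₁ z / M₂ z)) volume := by
    have h1 := hM₁_int.aestronglyMeasurable.aemeasurable
    have h2 := hM₂_int.aestronglyMeasurable.aemeasurable
    exact (h1.mul (Real.measurable_log.comp_aemeasurable (h1.div h2))).aestronglyMeasurable
  have hlogmeas' : AEStronglyMeasurable (fun z => M₂ z * Real.log (M₂ z / M₁ z)) volume := by
    have h1 := hM₁_int.aestronglyMeasurable.aemeasurable
    have h2 := hM₂_int.aestronglyMeasurable.aemeasurable
    exact (h2.mul (Real.measurable_log.comp_aemeasurable (h2.div h1))).aestronglyMeasurable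
  have h₁ : Integrable (fun z => M₁ z * Real.log (M₁ z / M₂ z)) :=
    Integrable.mono' (hM₁_int.const_mul ε) hlogmeas
      (Filter.Eventually.of_forall fun z => by
        rw [Real.norm_eq_abs]
        exact ldp_klog_abs ε (M₁ z) (M₂ z) hε (hM₁0 z) (hM₁M₂ z) (hM₂M₁ z))
  have h₂ : Integrable (fun z => M₂ z * Real.log (M₂ z / M₁ z)) :=
    Integrable.mono' (hM₂_int.const_mul ε) hlogmeas'
      (Filter.Eventually.of_forall fun z => by
        rw [Real.norm_eq_abs]
        exact ldp_klog_abs ε (M₂ z) (M₁ z) hε (hM₂0 z) (hM₂M₁ z) (hM₁M₂ z))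
  -- pointwise key bound
  have hkey : ∀ z, M₁ z * Real.log (M₁ z / M₂ z) + M₂ z * Real.log (M₂ z / M₁ z)
      ≤ K ^ 2 * M₁ z := fun z =>
    ldp_key_pt K (M₁ z) (M₂ z) (c z) hK0 (hc0 z) (hM₁_ge z) (hM₂_ge z) (hdiff z)
  calc (∫ z, M₁ z * Real.log (M₁ z / M₂ z)) + (∫ z, M₂ z * Real.log (M₂ z / M₁ z))
      = ∫ z, (M₁ z * Real.log (M₁ z / M₂ z) + M₂ z * Real.log (M₂ z / M₁ z)) :=
        (integral_add h₁ h₂).symm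
    _ ≤ ∫ z, K ^ 2 * M₁ z :=
        integral_mono (h₁.add h₂) (hM₁_int.const_mul _) hkey
    _ = K ^ 2 := by rw [integral_const_mul, hM₁_tot, mul_one]
    _ ≤ 4 * (Real.exp ε - 1) ^ 2 * T ^ 2 := by
        rw [hKdef]
        nlinarith [sq_nonneg ((Real.exp ε - 1) * T)]
end

section
/- Let Δ > 0, v > 0, α ∈ (0,1], and suppose Δ ≤ (1/2)·(1/2)^{α/(1+α)}·v^{1/(1+α)}. Let f(x) ∈ [−2Δ, 2Δ]. Define the reward distribution y(x) which equals sgn(f(x))·(v/(2Δ))^{1/α} with probability (2Δ/v)^{1/α}·|f(x)| and equals 0 otherwise. Then y(x) is a valid probability distribution with E[y(x)] = f(x) and E[|y(x)|^{1+α}] ≤ v. -/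
open Real

/-- The two-point reward distribution used in the lower-bound construction:
`y(x) = sgn(f(x))·(v/(2Δ))^{1/α}` with probability `p = (2Δ/v)^{1/α}·|f(x)|`, and
`y(x) = 0` otherwise. Provided `Δ ≤ (1/2)·(1/2)^{α/(1+α)}·v^{1/(1+α)}` and
`f(x) ∈ [−2Δ, 2Δ]`, this is a valid distribution (`p ≤ 1`), with mean `f(x)` and
`(1+α)`-th raw moment at most `v`. -/
theorem reward_distribution_valid (α v Δ fx : ℝ)
    (hα : 0 < α) (hα1 : α ≤ 1) (hv : 0 < v) (hΔ : 0 < Δ)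
    (hΔv : Δ ≤ (1 / 2) * (1 / 2) ^ (α / (1 + α)) * v ^ (1 / (1 + α)))
    (hfx : |fx| ≤ 2 * Δ) :
    (2 * Δ / v) ^ (1 / α) * |fx| ≤ 1 ∧
    ((2 * Δ / v) ^ (1 / α) * |fx|) * (Real.sign fx * (v / (2 * Δ)) ^ (1 / α)) +
      (1 - (2 * Δ / v) ^ (1 / α) * |fx|) * 0 = fx ∧
    ((2 * Δ / v) ^ (1 / α) * |fx|) * |Real.sign fx * (v / (2 * Δ)) ^ (1 / α)| ^ (1 + α) +
      (1 - (2 * Δ / v) ^ (1 / α) * |fx|) * |(0 : ℝ)| ^ (1 + α) ≤ v := by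
  have h2Δ : (0:ℝ) < 2 * Δ := by linarith
  have h1α : (0:ℝ) < 1 + α := by linarith
  have hdv : (0:ℝ) < 2 * Δ / v := div_pos h2Δ hv
  have hvd : (0:ℝ) < v / (2 * Δ) := div_pos hv h2Δ
  -- product of the two rpow factors is 1
  have hprod : (2 * Δ / v) ^ (1 / α) * (v / (2 * Δ)) ^ (1 / α) = 1 := by
    rw [← Real.mul_rpow hdv.le hvd.le]
    have : 2 * Δ / v * (v / (2 * Δ)) = 1 := by
      field_simp
    rw [this, Real.one_rpow]
  -- 2Δ ≤ v^(1/(1+α))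
  have hhalf : ((1:ℝ) / 2) ^ (α / (1 + α)) ≤ 1 :=
    Real.rpow_le_one (by norm_num) (by norm_num) (by positivity)
  have hvpow : (0:ℝ) < v ^ (1 / (1 + α)) := Real.rpow_pos_of_pos hv _
  have h2 : 2 * Δ ≤ v ^ (1 / (1 + α)) := by
    nlinarith [hvpow, hhalf, Real.rpow_pos_of_pos (show (0:ℝ) < 1/2 by norm_num) (α / (1 + α))]
  -- part 1
  have hA : (2 * Δ / v) ^ (1 / α) * (2 * Δ) ≤ 1 := by
    have e1 : (2 * Δ / v) ^ (1 / α) = (2 * Δ) ^ (1 / α) / v ^ (1 / α) :=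
      Real.div_rpow h2Δ.le hv.le _
    have e2 : (2 * Δ) ^ ((1 + α) / α) ≤ v ^ (1 / α) := by
      have := Real.rpow_le_rpow h2Δ.le h2 (by positivity : (0:ℝ) ≤ (1 + α) / α)
      rwa [← Real.rpow_mul hv.le, show 1 / (1 + α) * ((1 + α) / α) = 1 / α by field_simp] at this
    have e3 : (2 * Δ) ^ ((1 + α) / α) = (2 * Δ) ^ (1 / α) * (2 * Δ) := by
      rw [show (1 + α) / α = 1 / α + 1 by field_simp,
        Real.rpow_add h2Δ, Real.rpow_one]
    rw [e1, div_mul_eq_mul_div, ← e3, div_le_one (by positivity)]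
    exact e2
  have hp1 : (2 * Δ / v) ^ (1 / α) * |fx| ≤ 1 := by
    calc (2 * Δ / v) ^ (1 / α) * |fx| ≤ (2 * Δ / v) ^ (1 / α) * (2 * Δ) := by
          exact mul_le_mul_of_nonneg_left hfx (by positivity)
      _ ≤ 1 := hA
  refine ⟨hp1, ?_, ?_⟩
  · -- mean
    have : (2 * Δ / v) ^ (1 / α) * |fx| * (Real.sign fx * (v / (2 * Δ)) ^ (1 / α))
        = ((2 * Δ / v) ^ (1 / α) * (v / (2 * Δ)) ^ (1 / α)) * (Real.sign fx * |fx|) := by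
      ring
    have hsgn : Real.sign fx * |fx| = fx := by
      rcases lt_trichotomy fx 0 with h | h | h
      · rw [Real.sign_of_neg h, abs_of_neg h]; ring
      · simp [h]
      · rw [Real.sign_of_pos h, abs_of_pos h]; ring
    rw [mul_zero, add_zero, this, hprod, one_mul, hsgn]
  · -- moment
    rw [abs_zero, Real.zero_rpow (by positivity), mul_zero, add_zero]
    rcases eq_or_ne fx 0 with h0 | h0
    · simp [h0, hv.le]
    · have hs : |Real.sign fx| = 1 := by
        rcases lt_or_gt_of_ne h0 with h | h
        · rw [Real.sign_of_neg h]; norm_num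
        · rw [Real.sign_of_pos h]; norm_num
      have habs : |Real.sign fx * (v / (2 * Δ)) ^ (1 / α)| = (v / (2 * Δ)) ^ (1 / α) := by
        rw [abs_mul, hs, one_mul, abs_of_nonneg (Real.rpow_nonneg hvd.le _)]
      have hpow : ((v / (2 * Δ)) ^ (1 / α)) ^ (1 + α)
          = (v / (2 * Δ)) ^ (1 / α) * (v / (2 * Δ)) := by
        rw [← Real.rpow_mul hvd.le, show 1 / α * (1 + α) = 1 / α + 1 by field_simp,
          Real.rpow_add hvd, Real.rpow_one]
      rw [habs, hpow]
      calc (2 * Δ / v) ^ (1 / α) * |fx| * ((v / (2 * Δ)) ^ (1 / α) * (v / (2 * Δ)))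
          = ((2 * Δ / v) ^ (1 / α) * (v / (2 * Δ)) ^ (1 / α)) * (|fx| * (v / (2 * Δ))) := by
            ring
        _ = |fx| * (v / (2 * Δ)) := by rw [hprod, one_mul]
        _ ≤ (2 * Δ) * (v / (2 * Δ)) := mul_le_mul_of_nonneg_right hfx hvd.le
        _ = v := by field_simp
end

section
/- For the two-point reward distributions P̃₀ (corresponding to f ≡ 0) and P̃_m (corresponding to a function value f(x)) defined by: under P̃_m, y = sgn(f(x))(v/(2Δ))^{1/α} with probability (2Δ/v)^{1/α}|f(x)| and y = 0 otherwise; under P̃₀, y = 0 with probability 1 restricted appropriately (f = 0 case), the KL divergence satisfies D_KL(P̃₀ ‖ P̃_m) ≤ 2·(2Δ/v)^{1/α}·|f(x)|, provided Δ ≤ (1/2)(1/2)^{α/(1+α)} v^{1/(1+α)}. -/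
open Real

/-- KL divergence bound between the two-point reward distributions `P̃₀` (underlying
function identically zero, so the reward is `0` with probability one) and `P̃_m`
(underlying function value `f(x)`, so the reward is `sgn(f(x))(v/(2Δ))^{1/α}` with
probability `p = (2Δ/v)^{1/α}|f(x)|` and `0` otherwise). Both are supported on
`{−(v/(2Δ))^{1/α}, 0, (v/(2Δ))^{1/α}}` and
`D_KL(P̃₀‖P̃_m) = 1·log(1/(1−p)) = −log(1−p) ≤ 2p`, provided
`Δ ≤ (1/2)(1/2)^{α/(1+α)} v^{1/(1+α)}`. -/
theorem reward_kl_bound (α v Δ fx : ℝ)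
    (hα : 0 < α) (hα1 : α ≤ 1) (hv : 0 < v) (hΔ : 0 < Δ)
    (hfx : |fx| ≤ 2 * Δ)
    (hΔv : Δ ≤ (1 / 2) * (1 / 2) ^ (α / (1 + α)) * v ^ (1 / (1 + α))) :
    1 * Real.log (1 / (1 - (2 * Δ / v) ^ (1 / α) * |fx|)) ≤
      2 * (2 * Δ / v) ^ (1 / α) * |fx| := by
  set c : ℝ := (2 * Δ / v) ^ (1 / α) with hc
  have hc0 : 0 ≤ c := Real.rpow_nonneg (by positivity) _
  set p : ℝ := c * |fx| with hp
  have hp0 : 0 ≤ p := mul_nonneg hc0 (abs_nonneg _)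
  have h1α : 0 < 1 + α := by linarith
  -- p ≤ 1/2
  have hkey : (2 * Δ) ^ ((1 + α) / α) ≤ (1 / 2) * v ^ (1 / α) := by
    have h2Δ : (0:ℝ) ≤ 2 * Δ := by positivity
    have h2Δ' : 2 * Δ ≤ (1 / 2) ^ (α / (1 + α)) * v ^ (1 / (1 + α)) := by linarith
    have := Real.rpow_le_rpow h2Δ h2Δ' (le_of_lt (by positivity : (0:ℝ) < (1 + α) / α))
    calc (2 * Δ) ^ ((1 + α) / α)
        ≤ ((1 / 2) ^ (α / (1 + α)) * v ^ (1 / (1 + α))) ^ ((1 + α) / α) := this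
      _ = (1 / 2) * v ^ (1 / α) := by
          rw [Real.mul_rpow (by positivity) (by positivity),
            ← Real.rpow_mul (by norm_num), ← Real.rpow_mul hv.le]
          have e1 : α / (1 + α) * ((1 + α) / α) = 1 := by
            field_simp
          have e2 : 1 / (1 + α) * ((1 + α) / α) = 1 / α := by
            field_simp
          rw [e1, e2, Real.rpow_one]
  have hphalf : p ≤ 1 / 2 := by
    have hcd : c = (2 * Δ) ^ (1 / α) / v ^ (1 / α) := by
      rw [hc, Real.div_rpow (by positivity) hv.le]
    have hcΔ : c * (2 * Δ) ≤ 1 / 2 := by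
      rw [hcd, div_mul_eq_mul_div, ← Real.rpow_add_one (by positivity : (2*Δ:ℝ) ≠ 0)]
      have : 1 / α + 1 = (1 + α) / α := by field_simp
      rw [this, div_le_iff₀ (by positivity : (0:ℝ) < v ^ (1/α))]
      linarith [hkey]
    calc p ≤ c * (2 * Δ) := mul_le_mul_of_nonneg_left hfx hc0
      _ ≤ 1 / 2 := hcΔ
  have h1p : 0 < 1 - p := by linarith
  have hlog : Real.log (1 / (1 - p)) ≤ 1 / (1 - p) - 1 :=
    Real.log_le_sub_one_of_pos (by positivity)
  have : 1 / (1 - p) - 1 = p / (1 - p) := by field_simp; ring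
  rw [one_mul]
  have hfin : p / (1 - p) ≤ 2 * p := by
    rw [div_le_iff₀ h1p]
    nlinarith
  calc Real.log (1 / (1 - p)) ≤ 1 / (1 - p) - 1 := hlog
    _ = p / (1 - p) := this
    _ ≤ 2 * p := hfin
    _ = 2 * c * |fx| := by rw [hp]; ring
end

section
/- Median-of-means selection: Let θ₁,…,θ_k be points in a normed space and θ* a fixed point such that more than 2k/3 of the θ_j satisfy ‖θ_j − θ*‖ ≤ γ. Define r_j = median({‖θ_j − θ_s‖ : s ∈ [k] \ {j}}) and k★ = argmin_j r_j. Then ‖θ_{k★} − θ*‖ ≤ 3γ. -/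
open Finset

/-- Median-of-means selection. Let `θ₁, …, θ_k` be points of a normed space and `θ*`
a fixed point such that strictly more than `2k/3` of the `θ_j` satisfy
`‖θ_j − θ*‖ ≤ γ`. Let `r j` be a median of the multiset `{‖θ_j − θ_s‖ : s ≠ j}`
(i.e. at least half the elements are `≤ r j` and at least half are `≥ r j`), and let
`k★` minimize `r`. Then `‖θ_{k★} − θ*‖ ≤ 3γ`. -/
theorem median_of_means_selection {X : Type*} [NormedAddCommGroup X]
    (k : ℕ) (hk : 3 ≤ k) (θ : Fin k → X) (θstar : X) (γ : ℝ) (hγ : 0 < γ)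
    (hgood : (2 * (k : ℝ)) / 3 <
      ((Finset.univ.filter fun j => ‖θ j - θstar‖ ≤ γ).card : ℝ))
    (r : Fin k → ℝ)
    (hmed_le : ∀ j, ((k : ℝ) - 1) / 2 ≤
      (((Finset.univ.erase j).filter fun s => ‖θ j - θ s‖ ≤ r j).card : ℝ))
    (hmed_ge : ∀ j, ((k : ℝ) - 1) / 2 ≤
      (((Finset.univ.erase j).filter fun s => r j ≤ ‖θ j - θ s‖).card : ℝ))
    (kstar : Fin k) (hkstar : ∀ j, r kstar ≤ r j) :
    ‖θ kstar - θstar‖ ≤ 3 * γ := by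
  set G := Finset.univ.filter fun j => ‖θ j - θstar‖ ≤ γ with hG
  have hkR : (3 : ℝ) ≤ (k : ℝ) := by exact_mod_cast hk
  -- G is nonempty
  have hGne : G.Nonempty := by
    rw [← Finset.card_pos]
    by_contra h
    push_neg at h
    interval_cases h' : G.card
    · simp only [h', Nat.cast_zero] at hgood
      nlinarith
  obtain ⟨j, hj⟩ := hGne
  have hjgood : ‖θ j - θstar‖ ≤ γ := (Finset.mem_filter.mp hj).2
  -- Step 1 : r j ≤ 2γ for good j
  have hrj : r j ≤ 2 * γ := by
    by_contra h
    push_neg at h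
    have hsub : ((Finset.univ.erase j).filter fun s => r j ≤ ‖θ j - θ s‖) ⊆
        Finset.univ \ G := by
      intro s hs
      simp only [Finset.mem_filter, Finset.mem_erase] at hs
      simp only [Finset.mem_sdiff, Finset.mem_univ, true_and, hG, Finset.mem_filter,
        not_and, not_le]
      by_contra h2
      push_neg at h2
      have : ‖θ j - θ s‖ ≤ 2 * γ := by
        calc ‖θ j - θ s‖ ≤ ‖θ j - θstar‖ + ‖θstar - θ s‖ := by
              have := norm_sub_le_norm_sub_add_norm_sub (θ j) θstar (θ s)
              linarith [norm_sub_le (θ j - θstar) (θ s - θstar)]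
          _ ≤ γ + γ := by
              have : ‖θstar - θ s‖ = ‖θ s - θstar‖ := norm_sub_rev _ _
              linarith
          _ = 2 * γ := by ring
      linarith [hs.2]
    have hcard := Finset.card_le_card hsub
    have hsd : (Finset.univ \ G).card = k - G.card := by
      rw [Finset.card_sdiff_of_subset (Finset.subset_univ G), Finset.card_univ, Fintype.card_fin]
    have hGle : G.card ≤ k := by
      calc G.card ≤ Finset.univ.card := Finset.card_le_card (Finset.subset_univ G)
        _ = k := by simp
    have hsdR : ((Finset.univ \ G).card : ℝ) = (k : ℝ) - (G.card : ℝ) := by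
      rw [hsd]; push_cast [hGle]; ring
    have h1 := hmed_ge j
    have h2 : (((Finset.univ.erase j).filter fun s => r j ≤ ‖θ j - θ s‖).card : ℝ)
        ≤ (k : ℝ) - (G.card : ℝ) := by
      rw [← hsdR]; exact_mod_cast hcard
    linarith
  -- Step 2 : the set A of near points of kstar meets G
  set A := (Finset.univ.erase kstar).filter fun s => ‖θ kstar - θ s‖ ≤ r kstar with hA
  have hAG : (A ∩ G).Nonempty := by
    rw [← Finset.card_pos]
    by_contra h
    push_neg at h
    have hdis : Disjoint A G := by
      rw [Finset.disjoint_iff_inter_eq_empty, ← Finset.card_eq_zero]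
      omega
    have : A.card + G.card ≤ k := by
      rw [← Finset.card_union_of_disjoint hdis]
      calc (A ∪ G).card ≤ Finset.univ.card := Finset.card_le_card (Finset.subset_univ _)
        _ = k := by simp
    have hR : (A.card : ℝ) + (G.card : ℝ) ≤ (k : ℝ) := by exact_mod_cast this
    have hAcard := hmed_le kstar
    rw [← hA] at hAcard
    linarith
  obtain ⟨s, hs⟩ := hAG
  have hsA := Finset.mem_inter.mp hs |>.1
  have hsG := Finset.mem_inter.mp hs |>.2
  have h1 : ‖θ kstar - θ s‖ ≤ r kstar := (Finset.mem_filter.mp hsA).2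
  have h2 : ‖θ s - θstar‖ ≤ γ := (Finset.mem_filter.mp hsG).2
  have h3 : r kstar ≤ 2 * γ := le_trans (hkstar j) hrj
  calc ‖θ kstar - θstar‖ ≤ ‖θ kstar - θ s‖ + ‖θ s - θstar‖ := by
        have := norm_sub_le (θ kstar - θ s) (θstar - θ s)
        have h4 : θ kstar - θ s - (θstar - θ s) = θ kstar - θstar := by abel
        rw [h4] at this
        have h5 : ‖θstar - θ s‖ = ‖θ s - θstar‖ := norm_sub_rev _ _
        linarith
    _ ≤ 2 * γ + γ := by linarith
    _ = 3 * γ := by ring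
end
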